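/- arXiv:1707.04191 — 5 statements merged into one kernel-verified Lean document; each statement's English description precedes it below -/
import Mathlib

section
/- Let k ≥ 1, let μ ∈ ℝ^k and let Σ be a real symmetric positive definite k×k matrix. Then the infimum of ∫ g dP over all probability measures P ∈ 𝒫(μ,Σ) equals p(Ω(μ,Σ)), the optimal value of the semidefinite program (P). (Theorem 1 of the paper.) -/
/-!
Write `φ(ξ) = (ξ, 1)`. The key identity is `g(ξ) = minᵢ φ(ξ)ᵀ Cᵢ φ(ξ)`, so every feasible `M`
satisfies `φ(ξ)ᵀ M φ(ξ) ≤ g(ξ)`; integrating against `P ∈ 𝒫(μ,Σ)`, whose second-moment matrix of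
`φ` is `Ω`, gives `tr(Ω M) ≤ ∫ g dP`.

Conversely, a separation argument in the closed convex cone of pairs `(t, ∑ Xᵢ)` with `Xᵢ ⪰ 0`
and `∑ tr(Xᵢ Cᵢ) ≤ t` gives, for every `ε > 0`, matrices `Xᵢ ⪰ 0` with `∑ Xᵢ = Ω` and
`∑ tr(Xᵢ Cᵢ) ≤ p(Ω) + ε`. Each `Xᵢ`, divided by its last diagonal entry `pᵢ`, is the second-moment
matrix of `φ` under a finitely supported `Pᵢ`, and `∫ g dPᵢ ≤ ∫ φᵀ Cᵢ φ dPᵢ = tr(Xᵢ Cᵢ) / pᵢ`.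
The mixture `∑ pᵢ Pᵢ` lies in `𝒫(μ,Σ)` and has `∫ g ≤ p(Ω) + ε`.
-/

open Matrix MeasureTheory

/-- The constraint matrices `C_0 = 0` and
`C_i = [[0, e_i/2], [e_iᵀ/2, -ylow]]` for `i = 1,…,k` of the primal SDP (P). -/
noncomputable def Cmat (k : ℕ) (ylow : ℝ) : Fin (k + 1) → Matrix (Fin (k + 1)) (Fin (k + 1)) ℝ :=
  Fin.cases 0 fun i : Fin k =>
    Matrix.of fun a b =>
      if a = Fin.last k ∧ b = Fin.last k then -ylow
      else if a = i.castSucc ∧ b = Fin.last k then 1 / 2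
      else if a = Fin.last k ∧ b = i.castSucc then 1 / 2
      else 0

/-- A symmetric matrix `M` is feasible for (P) if `M - C_i ⪯ 0` for `i = 0,…,k`. -/
def PFeasible (k : ℕ) (ylow : ℝ) (M : Matrix (Fin (k + 1)) (Fin (k + 1)) ℝ) : Prop :=
  M.IsSymm ∧ ∀ i : Fin (k + 1), (Cmat k ylow i - M).PosSemidef

/-- The optimal value `p(Ω) = sup { ⟨Ω, M⟩ : M feasible }` of the primal SDP (P). -/
noncomputable def pval (k : ℕ) (ylow : ℝ) (Ω : Matrix (Fin (k + 1)) (Fin (k + 1)) ℝ) : ℝ :=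
  sSup {t : ℝ | ∃ M, PFeasible k ylow M ∧ t = (Ω * M).trace}

/-- `g(ξ) = min(ξ_1, …, ξ_k, ylow) - ylow`. -/
noncomputable def gfun (k : ℕ) (ylow : ℝ) (ξ : Fin k → ℝ) : ℝ :=
  min (⨅ i, ξ i) ylow - ylow

/-- The second order moment matrix `Ω(μ,Σ) = [[Σ + μμᵀ, μ], [μᵀ, 1]]`. -/
noncomputable def OmegaMat (k : ℕ) (μv : Fin k → ℝ) (Sm : Matrix (Fin k) (Fin k) ℝ) :
    Matrix (Fin (k + 1)) (Fin (k + 1)) ℝ :=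
  Matrix.of fun a b =>
    Fin.lastCases (Fin.lastCases 1 (fun j => μv j) b)
      (fun i => Fin.lastCases (μv i) (fun j => Sm i j + μv i * μv j) b) a

/-- `𝒫(μ,Σ)`: Borel probability measures on `ℝ^k` with mean `μ` and second moment
matrix `Σ + μμᵀ`. -/
def MomentSet (k : ℕ) (μv : Fin k → ℝ) (Sm : Matrix (Fin k) (Fin k) ℝ) :
    Set (Measure (Fin k → ℝ)) :=
  {P | IsProbabilityMeasure P ∧
    (∀ i, Integrable (fun ξ => ξ i) P) ∧
    (∀ i j, Integrable (fun ξ => ξ i * ξ j) P) ∧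
    (∀ i, ∫ ξ, ξ i ∂P = μv i) ∧
    (∀ i j, ∫ ξ, ξ i * ξ j ∂P = Sm i j + μv i * μv j)}

namespace Matrix

instance {m n : Type*} [Finite m] [Finite n] : FirstCountableTopology (Matrix m n ℝ) :=
  inferInstanceAs (FirstCountableTopology (m → n → ℝ))

instance {m n : Type*} [Finite m] [Finite n] : LocallyConvexSpace ℝ (Matrix m n ℝ) :=
  inferInstanceAs (LocallyConvexSpace ℝ (m → n → ℝ))

theorem PosSemidef.isSymm {n : Type*} {X : Matrix n n ℝ} (hX : X.PosSemidef) : X.IsSymm :=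
  isHermitian_iff_isSymm.1 hX.isHermitian

universe u

variable {n : Type u} [Fintype n]

theorem trace_vecMulVec_mul (x y : n → ℝ) (N : Matrix n n ℝ) :
    (vecMulVec x y * N).trace = y ⬝ᵥ (N *ᵥ x) := by
  simp only [trace, diag, mul_apply, vecMulVec_apply, dotProduct, mulVec, Finset.mul_sum]
  rw [Finset.sum_comm]
  exact Finset.sum_congr rfl fun a _ => Finset.sum_congr rfl fun b _ => by ring

theorem dotProduct_mulVec_eq_sum (N : Matrix n n ℝ) (x y : n → ℝ) :
    x ⬝ᵥ (N *ᵥ y) = ∑ a, ∑ b, N a b * (x a * y b) := by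
  simp only [dotProduct, mulVec, Finset.mul_sum]
  exact Finset.sum_congr rfl fun a _ => Finset.sum_congr rfl fun b _ => by ring

theorem PosSemidef.dotProduct_mulVec_self_nonneg {X : Matrix n n ℝ} (hX : X.PosSemidef)
    (x : n → ℝ) : 0 ≤ x ⬝ᵥ (X *ᵥ x) := by
  simpa using hX.dotProduct_mulVec_nonneg x

theorem isClosed_setOf_posSemidef : IsClosed {X : Matrix n n ℝ | X.PosSemidef} := by
  have : {X : Matrix n n ℝ | X.PosSemidef} =
      {X | Xᴴ = X} ∩ ⋂ x : n → ℝ, {X | 0 ≤ x ⬝ᵥ (X *ᵥ x)} := by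
    ext X
    simp only [Set.mem_ofPred_eq, Set.mem_inter_iff, Set.mem_iInter]
    exact ⟨fun h => ⟨h.1, h.dotProduct_mulVec_self_nonneg⟩,
      fun h => .of_dotProduct_mulVec_nonneg h.1 fun x => by simpa using h.2 x⟩
  rw [this]
  exact (isClosed_eq (by fun_prop) continuous_id).inter
    (isClosed_iInter fun x => isClosed_le continuous_const (by fun_prop))

theorem PosSemidef.diag_le_trace {X : Matrix n n ℝ} (hX : X.PosSemidef) (a : n) :
    X a a ≤ X.trace :=
  Finset.single_le_sum (f := fun b => X b b) (fun _ _ => hX.diag_nonneg) (Finset.mem_univ a)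

variable [DecidableEq n]

theorem PosSemidef.abs_apply_le {X : Matrix n n ℝ} (hX : X.PosSemidef) (a b : n) :
    |X a b| ≤ X a a + X b b := by
  have key : ∀ s : ℝ, 0 ≤ X a a + s * X b a + s * X a b + s * (s * X b b) := fun s => by
    have := hX.dotProduct_mulVec_self_nonneg (Pi.single a 1 + s • Pi.single b 1)
    simpa [mulVec_add, mulVec_smul, mulVec_single, add_dotProduct, smul_dotProduct,
      single_dotProduct, mul_add, ← add_assoc, mul_comm, mul_left_comm] using this
  have := hX.isSymm.apply a b
  rw [abs_le]
  constructor <;> nlinarith [key 1, key (-1)]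

theorem PosSemidef.apply_eq_zero_of_diag_eq_zero {X : Matrix n n ℝ}
    (hX : X.PosSemidef) {l : n} (hl : X l l = 0) (a : n) : X a l = 0 := by
  have h := (hX.dotProduct_mulVec_zero_iff (Pi.single l 1)).1 (by simp [mulVec_single, hl])
  simpa [mulVec_single] using congrFun h a

theorem PosSemidef.sub_vecMulVec_col {W : Matrix n n ℝ} (hW : W.PosSemidef) {l : n}
    (hl : W l l = 1) : (W - vecMulVec (fun a => W a l) (fun a => W a l)).PosSemidef := by
  set u : n → ℝ := fun a => W a l
  refine .of_dotProduct_mulVec_nonneg ?_ fun x => ?_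
  · refine hW.isHermitian.sub ?_
    ext a b
    simp [vecMulVec_apply, mul_comm]
  · have hWx : Pi.single l 1 ⬝ᵥ (W *ᵥ x) = u ⬝ᵥ x := by
      rw [single_dotProduct, one_mul]
      simp [mulVec, dotProduct, u, fun b => hW.isSymm.apply b l]
    have hxW : x ⬝ᵥ (W *ᵥ Pi.single l 1) = u ⬝ᵥ x := by
      simp [mulVec_single, dotProduct, u, mul_comm]
    -- Cauchy–Schwarz for the form `W`, evaluated at `x - (u ⬝ᵥ x) eₗ`
    have := hW.dotProduct_mulVec_self_nonneg (x - (u ⬝ᵥ x) • Pi.single l 1)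
    simp only [mulVec_sub, mulVec_smul, sub_dotProduct, dotProduct_sub, smul_dotProduct,
      dotProduct_smul, hWx, hxW, smul_eq_mul] at this
    simp [mulVec_single, hl] at this
    simp only [star_trivial, sub_mulVec, dotProduct_sub, vecMulVec_mulVec, op_smul_eq_smul,
      dotProduct_smul, smul_eq_mul, dotProduct_comm x u]
    nlinarith [this]

/-- The points are `u ± √|n| A eⱼ` with equal weights, where `u` is the `l`-th column of `W` and
`A² = W - u uᵀ`. -/
theorem PosSemidef.exists_eq_sum_smul_vecMulVec {W : Matrix n n ℝ} (hW : W.PosSemidef) {l : n}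
    (hl : W l l = 1) :
    ∃ (κ : Type u) (_ : Fintype κ) (w : κ → ℝ) (p : κ → n → ℝ), (∀ j, 0 ≤ w j) ∧
      ∑ j, w j = 1 ∧ (∀ j, p j l = 1) ∧ W = ∑ j, w j • vecMulVec (p j) (p j) := by
  set u : n → ℝ := fun a => W a l
  set R := W - vecMulVec u u
  obtain ⟨A, hA, hAA⟩ : ∃ A : Matrix n n ℝ, A.PosSemidef ∧ A * A = R :=
    open scoped MatrixOrder in
      ⟨CFC.sqrt R, (CFC.sqrt_nonneg R).posSemidef,
        CFC.sqrt_mul_sqrt_self R (hW.sub_vecMulVec_col hl).nonneg⟩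
  have hAA' : ∀ a b, ∑ j, A a j * A b j = R a b := fun a b => by
    simp [← hAA, mul_apply, fun j => hA.isSymm.apply j b]
  have hAl : ∀ j, A l j = 0 := by
    have : ∑ j, A l j * A l j = 0 := by simp [hAA', R, u, hl, vecMulVec_apply]
    intro j
    exact mul_self_eq_zero.1 <|
      (Finset.sum_eq_zero_iff_of_nonneg fun j _ => mul_self_nonneg (A l j)).1 this j (by simp)
  have hN : (0 : ℝ) < Fintype.card n := by exact_mod_cast Fintype.card_pos_iff.2 ⟨l⟩
  set c := Real.sqrt (Fintype.card n)
  have hc : c * c = Fintype.card n := Real.mul_self_sqrt hN.le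
  refine ⟨Bool × n, inferInstance, fun _ => (2 * Fintype.card n : ℝ)⁻¹,
    fun j a => u a + (if j.1 then c else -c) * A a j.2, fun _ => by positivity, ?_,
    fun j => by simp [hAl, u, hl], ?_⟩
  · simp [Fintype.card_bool]
    field_simp
  · ext a b
    simp only [sum_apply, smul_apply, vecMulVec_apply, Fintype.sum_prod_type, Fintype.sum_bool,
      smul_eq_mul, ← Finset.mul_sum, if_true, Bool.false_eq_true, if_false,
      ← Finset.sum_add_distrib]
    have key : ∀ j, (u a + c * A a j) * (u b + c * A b j) + (u a + -c * A a j) * (u b + -c * A b j)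
        = 2 * (u a * u b) + 2 * (c * c) * (A a j * A b j) := fun j => by ring
    simp only [key, Finset.sum_add_distrib, ← Finset.mul_sum, hAA', Finset.sum_const,
      Finset.card_univ, nsmul_eq_mul, hc]
    simp only [R, u, sub_apply, vecMulVec_apply]
    field_simp
    ring

/-- Members with vanishing `(l, l)` entry have vanishing `l`-th row and column; they are replaced
by `0` and their sum is added to one member with nonzero `(l, l)` entry. -/
theorem exists_posSemidef_regroup {ι : Type*} [Fintype ι] [DecidableEq ι]
    {X : ι → Matrix n n ℝ} (hX : ∀ i, (X i).PosSemidef) {l : n} (hl : ∃ i, X i l l ≠ 0) :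
    ∃ Y : ι → Matrix n n ℝ, (∀ i, (Y i).PosSemidef) ∧ ∑ i, Y i = ∑ i, X i ∧
      (∀ i, Y i l l = 0 → Y i = 0) ∧ ∀ i a, Y i a l = X i a l ∧ Y i l a = X i l a := by
  obtain ⟨i₀, hi₀⟩ := hl
  set T := ∑ i with X i l l = 0, X i
  have hXl : ∀ i, X i l l = 0 → ∀ a, X i a l = 0 ∧ X i l a = 0 := fun i hi a =>
    ⟨(hX i).apply_eq_zero_of_diag_eq_zero hi a,
      (hX i).isSymm.apply a l ▸ (hX i).apply_eq_zero_of_diag_eq_zero hi a⟩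
  have hTl : ∀ a, T a l = 0 ∧ T l a = 0 := fun a => by
    simp only [T, sum_apply]
    exact ⟨Finset.sum_eq_zero fun i hi => (hXl i (Finset.mem_filter.1 hi).2 a).1,
      Finset.sum_eq_zero fun i hi => (hXl i (Finset.mem_filter.1 hi).2 a).2⟩
  refine ⟨fun i => if X i l l = 0 then 0 else X i + if i = i₀ then T else 0, fun i => ?_, ?_,
    fun i => ?_, fun i a => ?_⟩
  · dsimp only
    split_ifs
    exacts [.zero, (hX i).add (posSemidef_sum _ fun i _ => hX i), by simpa using hX i]
  · rw [Finset.sum_ite, Finset.sum_const_zero, zero_add, Finset.sum_add_distrib,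
      Finset.sum_ite_eq', if_pos (by simpa using hi₀), add_comm,
      Finset.sum_filter_add_sum_filter_not]
  · dsimp only
    split_ifs with h1 h2
    · exact fun _ => rfl
    · simp [(hTl l).1, h1]
    · simp [h1]
  · dsimp only
    split_ifs with h1 h2 <;> simp [hXl i, *]

theorem exists_isSymm_forall_trace_mul_eq (L : Matrix n n ℝ →ₗ[ℝ] ℝ) :
    ∃ Y : Matrix n n ℝ, Y.IsSymm ∧ ∀ Z : Matrix n n ℝ, Z.IsSymm → L Z = (Z * Y).trace := by
  set Y₀ : Matrix n n ℝ := of fun b a => L (single a b 1)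
  have hY₀ : ∀ Z, L Z = (Z * Y₀).trace := fun Z => by
    conv_lhs => rw [matrix_eq_sum_single Z]
    simp only [map_sum, Y₀, trace, diag, mul_apply, of_apply]
    refine Finset.sum_congr rfl fun a _ => Finset.sum_congr rfl fun b _ => ?_
    rw [← smul_eq_mul, ← map_smul, smul_single, smul_eq_mul, mul_one]
  refine ⟨(1 / 2 : ℝ) • (Y₀ + Y₀ᵀ), ?_, fun Z hZ => ?_⟩
  · simp [IsSymm, add_comm]
  · have : (Z * Y₀ᵀ).trace = (Z * Y₀).trace := by
      rw [← trace_transpose, transpose_mul, transpose_transpose, hZ.eq, trace_mul_comm]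
    rw [hY₀, Matrix.mul_smul, mul_add, trace_smul, trace_add, this]
    simp; ring

end Matrix

namespace MeasureTheory

variable {α E ι : Type*} [MeasurableSpace α] [NormedAddCommGroup E] [NormedSpace ℝ E]

theorem integral_finsetSum_ofReal_smul_measure {μ : ι → Measure α} {s : Finset ι} {w : ι → ℝ}
    (hw : ∀ i ∈ s, 0 ≤ w i) {f : α → E} (hf : ∀ i ∈ s, Integrable f (μ i)) :
    ∫ x, f x ∂(∑ i ∈ s, ENNReal.ofReal (w i) • μ i) = ∑ i ∈ s, w i • ∫ x, f x ∂(μ i) := by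
  rw [integral_finsetSum_measure fun i hi => (hf i hi).smul_measure ENNReal.ofReal_ne_top]
  exact Finset.sum_congr rfl fun i hi => by
    rw [integral_smul_measure, ENNReal.toReal_ofReal (hw i hi)]

theorem isProbabilityMeasure_finsetSum_ofReal_smul {μ : ι → Measure α} {s : Finset ι} {w : ι → ℝ}
    (hw : ∀ i ∈ s, 0 ≤ w i) (hw1 : ∑ i ∈ s, w i = 1) (hμ : ∀ i ∈ s, IsProbabilityMeasure (μ i)) :
    IsProbabilityMeasure (∑ i ∈ s, ENNReal.ofReal (w i) • μ i) := by
  constructor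
  rw [Measure.finsetSum_apply, ← ENNReal.ofReal_one, ← hw1, ENNReal.ofReal_sum_of_nonneg hw]
  refine Finset.sum_congr rfl fun i hi => ?_
  have := hμ i hi
  simp

end MeasureTheory

namespace MomentSDP

variable {k : ℕ}

/-- Homogeneous coordinates `(ξ, 1)`: the moment matrix `Ω(μ,Σ)` is `𝔼[augment ξ (augment ξ)ᵀ]`. -/
def augment (ξ : Fin k → ℝ) : Fin (k + 1) → ℝ := Fin.snoc ξ 1

@[simp] theorem augment_castSucc (ξ : Fin k → ℝ) (i : Fin k) : augment ξ i.castSucc = ξ i :=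
  Fin.snoc_castSucc ..

@[simp] theorem augment_last (ξ : Fin k → ℝ) : augment ξ (Fin.last k) = 1 :=
  Fin.snoc_last ..

theorem augment_init {x : Fin (k + 1) → ℝ} (hx : x (Fin.last k) = 1) :
    augment (Fin.init x) = x := by
  rw [augment, ← hx, Fin.snoc_init_self]

theorem measurable_augment_mul (a b : Fin (k + 1)) :
    Measurable fun ξ : Fin k → ℝ => augment ξ a * augment ξ b := by
  unfold augment; fun_prop

structure HasSecondMoments (P : Measure (Fin k → ℝ)) (W : Matrix (Fin (k + 1)) (Fin (k + 1)) ℝ) :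
    Prop where
  isProbabilityMeasure : IsProbabilityMeasure P
  integrable : ∀ a b, Integrable (fun ξ => augment ξ a * augment ξ b) P
  integral_eq : ∀ a b, ∫ ξ, augment ξ a * augment ξ b ∂P = W a b

theorem hasSecondMoments_dirac (ξ : Fin k → ℝ) :
    HasSecondMoments (Measure.dirac ξ) (vecMulVec (augment ξ) (augment ξ)) where
  isProbabilityMeasure := inferInstance
  integrable a b := integrable_dirac' (measurable_augment_mul a b).stronglyMeasurable enorm_lt_top
  integral_eq a b := by
    rw [integral_dirac' _ _ (measurable_augment_mul a b).stronglyMeasurable, vecMulVec_apply]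

theorem HasSecondMoments.finsetSum_ofReal_smul {ι : Type*} {s : Finset ι} {w : ι → ℝ}
    {P : ι → Measure (Fin k → ℝ)} {W : ι → Matrix (Fin (k + 1)) (Fin (k + 1)) ℝ}
    (hw : ∀ i ∈ s, 0 ≤ w i) (hw1 : ∑ i ∈ s, w i = 1) (hP : ∀ i ∈ s, HasSecondMoments (P i) (W i)) :
    HasSecondMoments (∑ i ∈ s, ENNReal.ofReal (w i) • P i) (∑ i ∈ s, w i • W i) where
  isProbabilityMeasure :=
    isProbabilityMeasure_finsetSum_ofReal_smul hw hw1 fun i hi => (hP i hi).isProbabilityMeasure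
  integrable a b :=
    integrable_finsetSum_measure.2 fun i hi =>
      ((hP i hi).integrable a b).smul_measure ENNReal.ofReal_ne_top
  integral_eq a b := by
    rw [integral_finsetSum_ofReal_smul_measure hw fun i hi => (hP i hi).integrable a b]
    simp only [Matrix.sum_apply, Matrix.smul_apply, smul_eq_mul]
    exact Finset.sum_congr rfl fun i hi => by rw [(hP i hi).integral_eq]

theorem exists_hasSecondMoments {W : Matrix (Fin (k + 1)) (Fin (k + 1)) ℝ} (hW : W.PosSemidef)
    (hl : W (Fin.last k) (Fin.last k) = 1) : ∃ P, HasSecondMoments P W := by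
  obtain ⟨κ, _, w, p, hw, hw1, hpl, rfl⟩ := hW.exists_eq_sum_smul_vecMulVec hl
  refine ⟨∑ j, ENNReal.ofReal (w j) • Measure.dirac (Fin.init (p j)), ?_⟩
  simpa only [augment_init (hpl _)] using HasSecondMoments.finsetSum_ofReal_smul
    (fun j _ => hw j) hw1 fun j _ => hasSecondMoments_dirac (Fin.init (p j))

variable {P : Measure (Fin k → ℝ)} {W : Matrix (Fin (k + 1)) (Fin (k + 1)) ℝ}

theorem HasSecondMoments.integrable_dotProduct_mulVec (hP : HasSecondMoments P W)
    (N : Matrix (Fin (k + 1)) (Fin (k + 1)) ℝ) :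
    Integrable (fun ξ => augment ξ ⬝ᵥ (N *ᵥ augment ξ)) P := by
  simp_rw [dotProduct_mulVec_eq_sum]
  exact integrable_finsetSum _ fun a _ => integrable_finsetSum _ fun b _ =>
    (hP.integrable a b).const_mul _

theorem HasSecondMoments.integral_dotProduct_mulVec (hP : HasSecondMoments P W)
    (N : Matrix (Fin (k + 1)) (Fin (k + 1)) ℝ) :
    ∫ ξ, augment ξ ⬝ᵥ (N *ᵥ augment ξ) ∂P = (W * Nᵀ).trace := by
  simp_rw [dotProduct_mulVec_eq_sum]
  rw [integral_finsetSum _ fun a _ => integrable_finsetSum _ fun b _ =>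
    (hP.integrable a b).const_mul (N a b)]
  refine Finset.sum_congr rfl fun a _ => ?_
  rw [integral_finsetSum _ fun b _ => (hP.integrable a b).const_mul (N a b)]
  simp [mul_apply, integral_const_mul, hP.integral_eq, mul_comm]

theorem mem_momentSet_iff {μv : Fin k → ℝ} {Sm : Matrix (Fin k) (Fin k) ℝ} :
    P ∈ MomentSet k μv Sm ↔ HasSecondMoments P (OmegaMat k μv Sm) := by
  constructor
  · rintro ⟨hprob, h1, h2, hm1, hm2⟩
    refine ⟨hprob, fun a b => ?_, fun a b => ?_⟩ <;>
      induction a using Fin.lastCases <;> induction b using Fin.lastCases <;>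
      simp [OmegaMat, mul_comm, *]
  · rintro ⟨hprob, hint, heq⟩
    refine ⟨hprob, fun i => by simpa using hint i.castSucc (Fin.last k),
      fun i j => by simpa using hint i.castSucc j.castSucc,
      fun i => by simpa [OmegaMat] using heq i.castSucc (Fin.last k),
      fun i j => by simpa [OmegaMat] using heq i.castSucc j.castSucc⟩

variable {ylow : ℝ}

theorem cmat_isSymm (i : Fin (k + 1)) : (Cmat k ylow i).IsSymm := by
  induction i using Fin.cases with
  | zero => exact isSymm_zero
  | succ j =>
    have := (Fin.castSucc_lt_last j).ne
    have := (Fin.castSucc_lt_last j).ne'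
    ext a b
    simp only [Cmat, Fin.cases_succ, transpose_apply, of_apply]
    split_ifs <;> simp_all

theorem cmat_apply_eq_zero (i : Fin (k + 1)) {a b : Fin (k + 1)} (ha : a ≠ Fin.last k)
    (hb : b ≠ Fin.last k) : Cmat k ylow i a b = 0 := by
  induction i using Fin.cases <;> simp [Cmat, ha, hb]

theorem dotProduct_cmat_succ_mulVec (x : Fin (k + 1) → ℝ) (j : Fin k) :
    x ⬝ᵥ (Cmat k ylow j.succ *ᵥ x) =
      x j.castSucc * x (Fin.last k) - ylow * (x (Fin.last k) * x (Fin.last k)) := by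
  simp [Cmat, dotProduct_mulVec_eq_sum, Fin.sum_univ_castSucc]
  ring

theorem pFeasible_of_forall_dotProduct_mulVec_le {M : Matrix (Fin (k + 1)) (Fin (k + 1)) ℝ}
    (hM : M.IsSymm) (h : ∀ i x, x ⬝ᵥ (M *ᵥ x) ≤ x ⬝ᵥ (Cmat k ylow i *ᵥ x)) :
    PFeasible k ylow M :=
  ⟨hM, fun i => .of_dotProduct_mulVec_nonneg
    (isHermitian_iff_isSymm.2 ((cmat_isSymm i).sub hM)) fun x => by
      simpa [sub_mulVec] using h i x⟩

theorem pFeasible_neg_smul_one : PFeasible k ylow (-(1 + |ylow|) • (1 : Matrix _ _ ℝ)) := by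
  refine pFeasible_of_forall_dotProduct_mulVec_le (isSymm_one.smul _) fun i x => ?_
  have hxx : 0 ≤ x ⬝ᵥ x := Finset.sum_nonneg fun a _ => mul_self_nonneg (x a)
  simp only [smul_mulVec, one_mulVec, dotProduct_smul, smul_eq_mul]
  induction i using Fin.cases with
  | zero => simp [Cmat]; nlinarith [abs_nonneg ylow]
  | succ j =>
    have hpair : x j.castSucc * x j.castSucc + x (Fin.last k) * x (Fin.last k) ≤ x ⬝ᵥ x := by
      rw [← Finset.sum_pair (f := fun a => x a * x a) (Fin.castSucc_lt_last j).ne]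
      exact Finset.sum_le_sum_of_subset_of_nonneg (Finset.subset_univ _)
        fun a _ _ => mul_self_nonneg (x a)
    rw [dotProduct_cmat_succ_mulVec]
    nlinarith [mul_nonneg (by positivity : (0 : ℝ) ≤ 1 + |ylow|) (sub_nonneg.2 hpair),
      mul_le_mul_of_nonneg_right (le_abs_self ylow) (mul_self_nonneg (x (Fin.last k))),
      mul_nonneg (abs_nonneg ylow) (mul_self_nonneg (x j.castSucc)),
      mul_self_nonneg (x j.castSucc + x (Fin.last k))]

theorem gfun_eq_ciInf (hk : 0 < k) (ξ : Fin k → ℝ) :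
    gfun k ylow ξ = ⨅ i, augment ξ ⬝ᵥ (Cmat k ylow i *ᵥ augment ξ) := by
  have : Nonempty (Fin k) := ⟨⟨0, hk⟩⟩
  set q := fun i => augment ξ ⬝ᵥ (Cmat k ylow i *ᵥ augment ξ)
  have hq0 : q 0 = 0 := by simp [q, Cmat]
  have hqs : ∀ j, q j.succ = ξ j - ylow := fun j => by simp [q, dotProduct_cmat_succ_mulVec]
  unfold gfun
  refine le_antisymm (le_ciInf fun i => ?_) ?_
  · induction i using Fin.cases with
    | zero => linarith [hq0, min_le_right (⨅ i, ξ i) ylow]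
    | succ j => linarith [hqs j, min_le_left (⨅ i, ξ i) ylow, ciInf_le (Finite.bddBelow_range ξ) j]
  · obtain ⟨j, hj⟩ := exists_eq_ciInf_of_finite (f := ξ)
    rcases le_total (⨅ i, ξ i) ylow with h | h
    · rw [min_eq_left h, ← hj, ← hqs]
      exact ciInf_le (Finite.bddBelow_range q) _
    · rw [min_eq_right h, sub_self, ← hq0]
      exact ciInf_le (Finite.bddBelow_range q) _

theorem gfun_le_augment_dotProduct_cmat_mulVec (hk : 0 < k) (ξ : Fin k → ℝ) (i : Fin (k + 1)) :
    gfun k ylow ξ ≤ augment ξ ⬝ᵥ (Cmat k ylow i *ᵥ augment ξ) := by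
  rw [gfun_eq_ciInf hk]
  exact ciInf_le (Finite.bddBelow_range _) i

theorem PFeasible.augment_dotProduct_mulVec_le_gfun (hk : 0 < k)
    {M : Matrix (Fin (k + 1)) (Fin (k + 1)) ℝ} (hM : PFeasible k ylow M) (ξ : Fin k → ℝ) :
    augment ξ ⬝ᵥ (M *ᵥ augment ξ) ≤ gfun k ylow ξ := by
  rw [gfun_eq_ciInf hk]
  refine le_ciInf fun i => ?_
  have := (hM.2 i).dotProduct_mulVec_self_nonneg (augment ξ)
  rwa [sub_mulVec, dotProduct_sub, sub_nonneg] at this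

theorem measurable_gfun : Measurable (gfun k ylow) :=
  ((Measurable.iInf fun i => measurable_pi_apply i).min measurable_const).sub_const _

theorem HasSecondMoments.integrable_gfun (hk : 0 < k) (hP : HasSecondMoments P W) :
    Integrable (gfun k ylow) P := by
  refine (integrable_finsetSum Finset.univ fun i _ =>
    (hP.integrable_dotProduct_mulVec (Cmat k ylow i)).abs).mono'
      measurable_gfun.aestronglyMeasurable (ae_of_all _ fun ξ => ?_)
  obtain ⟨i, hi⟩ := exists_eq_ciInf_of_finite
    (f := fun i => augment ξ ⬝ᵥ (Cmat k ylow i *ᵥ augment ξ))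
  rw [Real.norm_eq_abs, gfun_eq_ciInf hk, ← hi]
  exact Finset.single_le_sum (f := fun i => |augment ξ ⬝ᵥ (Cmat k ylow i *ᵥ augment ξ)|)
    (fun i _ => abs_nonneg _) (Finset.mem_univ i)

theorem HasSecondMoments.trace_mul_le_integral_gfun (hk : 0 < k) (hP : HasSecondMoments P W)
    {M : Matrix (Fin (k + 1)) (Fin (k + 1)) ℝ} (hM : PFeasible k ylow M) :
    (W * M).trace ≤ ∫ ξ, gfun k ylow ξ ∂P := by
  calc (W * M).trace = ∫ ξ, augment ξ ⬝ᵥ (M *ᵥ augment ξ) ∂P := by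
        rw [hP.integral_dotProduct_mulVec, hM.1.eq]
    _ ≤ ∫ ξ, gfun k ylow ξ ∂P :=
        integral_mono (hP.integrable_dotProduct_mulVec M) (hP.integrable_gfun hk)
          (PFeasible.augment_dotProduct_mulVec_le_gfun hk hM)

theorem HasSecondMoments.integral_gfun_le (hk : 0 < k) (hP : HasSecondMoments P W)
    (i : Fin (k + 1)) : ∫ ξ, gfun k ylow ξ ∂P ≤ (W * Cmat k ylow i).trace := by
  calc ∫ ξ, gfun k ylow ξ ∂P ≤ ∫ ξ, augment ξ ⬝ᵥ (Cmat k ylow i *ᵥ augment ξ) ∂P :=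
        integral_mono (hP.integrable_gfun hk) (hP.integrable_dotProduct_mulVec _)
          (gfun_le_augment_dotProduct_cmat_mulVec hk · i)
    _ = (W * Cmat k ylow i).trace := by rw [hP.integral_dotProduct_mulVec, (cmat_isSymm i).eq]

theorem trace_mul_cmat_congr {Y X : Matrix (Fin (k + 1)) (Fin (k + 1)) ℝ}
    (h : ∀ a, Y a (Fin.last k) = X a (Fin.last k) ∧ Y (Fin.last k) a = X (Fin.last k) a)
    (i : Fin (k + 1)) : (Y * Cmat k ylow i).trace = (X * Cmat k ylow i).trace := by
  simp only [trace, diag, mul_apply]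
  refine Finset.sum_congr rfl fun a _ => Finset.sum_congr rfl fun b _ => ?_
  by_cases ha : a = Fin.last k
  · rw [ha, (h b).2]
  by_cases hb : b = Fin.last k
  · rw [hb, (h a).1]
  rw [cmat_apply_eq_zero i hb ha, mul_zero, mul_zero]

theorem integral_gfun_finsetSum_ofReal_smul_le (hk : 0 < k) {s : Finset (Fin (k + 1))}
    {w : Fin (k + 1) → ℝ} {Q : Fin (k + 1) → Measure (Fin k → ℝ)}
    {W : Fin (k + 1) → Matrix (Fin (k + 1)) (Fin (k + 1)) ℝ} (hw : ∀ i ∈ s, 0 ≤ w i)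
    (hQ : ∀ i ∈ s, HasSecondMoments (Q i) (W i)) :
    ∫ ξ, gfun k ylow ξ ∂(∑ i ∈ s, ENNReal.ofReal (w i) • Q i) ≤
      ∑ i ∈ s, w i * (W i * Cmat k ylow i).trace := by
  rw [integral_finsetSum_ofReal_smul_measure hw fun i hi => (hQ i hi).integrable_gfun hk]
  exact Finset.sum_le_sum fun i hi =>
    mul_le_mul_of_nonneg_left ((hQ i hi).integral_gfun_le hk i) (hw i hi)

/-- The measure is a mixture whose `i`-th component has second-moment matrix `Xᵢ / (Xᵢ)ₗₗ`, after
the members with `(Xᵢ)ₗₗ = 0` have been absorbed by `exists_posSemidef_regroup`. -/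
theorem exists_hasSecondMoments_integral_gfun_le (hk : 0 < k)
    {X : Fin (k + 1) → Matrix (Fin (k + 1)) (Fin (k + 1)) ℝ} (hX : ∀ i, (X i).PosSemidef)
    (hl : (∑ i, X i) (Fin.last k) (Fin.last k) = 1) :
    ∃ P, HasSecondMoments P (∑ i, X i) ∧
      ∫ ξ, gfun k ylow ξ ∂P ≤ ∑ i, (X i * Cmat k ylow i).trace := by
  obtain ⟨Y, hY, hYX, hY0, hYl⟩ := exists_posSemidef_regroup hX (l := Fin.last k) <| by
    by_contra! h
    simp [Matrix.sum_apply, h] at hl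
  set p := fun i => Y i (Fin.last k) (Fin.last k)
  set s := Finset.univ.filter fun i => p i ≠ 0
  have hp : ∀ i ∈ s, 0 < p i := fun i hi =>
    lt_of_le_of_ne (hY i).diag_nonneg (Ne.symm (Finset.mem_filter.1 hi).2)
  have hcomp : ∀ i, ∃ Q, i ∈ s → HasSecondMoments Q ((p i)⁻¹ • Y i) := fun i => by
    by_cases hi : i ∈ s
    · obtain ⟨Q, hQ⟩ := exists_hasSecondMoments ((hY i).smul (inv_nonneg.2 (hp i hi).le))
        (by simp [inv_mul_cancel₀ (hp i hi).ne', p])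
      exact ⟨Q, fun _ => hQ⟩
    · exact ⟨0, fun h => absurd h hi⟩
  choose Q hQ using hcomp
  have hYs : ∑ i ∈ s, Y i = ∑ i, X i := by
    rw [← hYX, Finset.sum_filter_of_ne]
    exact fun i _ h => mt (hY0 i) h
  have hws : ∑ i ∈ s, p i = 1 := by
    rw [← hl, ← hYs, Matrix.sum_apply]
  have hmom := HasSecondMoments.finsetSum_ofReal_smul (fun i hi => (hp i hi).le) hws hQ
  have hsum : ∑ i ∈ s, p i • (p i)⁻¹ • Y i = ∑ i, X i := by
    rw [← hYs]
    exact Finset.sum_congr rfl fun i hi => by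
      rw [smul_smul, mul_inv_cancel₀ (hp i hi).ne', one_smul]
  rw [hsum] at hmom
  refine ⟨_, hmom, ?_⟩
  calc ∫ ξ, gfun k ylow ξ ∂(∑ i ∈ s, ENNReal.ofReal (p i) • Q i)
      ≤ ∑ i ∈ s, p i * ((p i)⁻¹ • Y i * Cmat k ylow i).trace :=
        integral_gfun_finsetSum_ofReal_smul_le hk (fun i hi => (hp i hi).le) hQ
    _ = ∑ i ∈ s, (Y i * Cmat k ylow i).trace := Finset.sum_congr rfl fun i hi => by
        rw [smul_mul, trace_smul, smul_eq_mul, ← mul_assoc, mul_inv_cancel₀ (hp i hi).ne', one_mul]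
    _ = ∑ i, (Y i * Cmat k ylow i).trace :=
        Finset.sum_filter_of_ne fun i _ h => mt (fun h0 => by simp [hY0 i h0]) h
    _ = ∑ i, (X i * Cmat k ylow i).trace :=
        Finset.sum_congr rfl fun i _ => trace_mul_cmat_congr (hYl i) i

variable {μv : Fin k → ℝ} {Sm : Matrix (Fin k) (Fin k) ℝ}

theorem omegaMat_last_last : OmegaMat k μv Sm (Fin.last k) (Fin.last k) = 1 := by
  simp [OmegaMat]

theorem posSemidef_omegaMat (hS : Sm.PosSemidef) : (OmegaMat k μv Sm).PosSemidef := by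
  set B : Matrix (Fin k) (Fin (k + 1)) ℝ := of fun i a => if a = i.castSucc then 1 else 0
  have : OmegaMat k μv Sm = Bᴴ * Sm * B + vecMulVec (augment μv) (augment μv) := by
    ext a b
    induction a using Fin.lastCases <;> induction b using Fin.lastCases <;>
      simp [OmegaMat, B, mul_apply, vecMulVec_apply, (Fin.castSucc_lt_last _).ne']
  rw [this]
  exact (hS.conjTranspose_mul_mul_same B).add (posSemidef_vecMulVec_self_star _)

section

variable {n ι : Type*} [Fintype n] [Fintype ι]

def dualCone (C : ι → Matrix n n ℝ) : Set (ℝ × Matrix n n ℝ) :=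
  {q | ∃ X : ι → Matrix n n ℝ, (∀ i, (X i).PosSemidef) ∧ ∑ i, X i = q.2 ∧
    ∑ i, (X i * C i).trace ≤ q.1}

variable {C : ι → Matrix n n ℝ}

theorem smul_mem_dualCone {q : ℝ × Matrix n n ℝ} (hq : q ∈ dualCone C) {c : ℝ} (hc : 0 ≤ c) :
    c • q ∈ dualCone C := by
  obtain ⟨X, hX, hXq, hXt⟩ := hq
  refine ⟨c • X, fun i => (hX i).smul hc, ?_, ?_⟩
  · simp [← Finset.smul_sum, hXq]
  · simpa [← Finset.mul_sum] using mul_le_mul_of_nonneg_left hXt hc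

theorem convex_dualCone : Convex ℝ (dualCone C) := by
  rintro q ⟨X, hX, hXq, hXt⟩ q' ⟨X', hX', hXq', hXt'⟩ a b ha hb -
  refine ⟨a • X + b • X', fun i => ((hX i).smul ha).add ((hX' i).smul hb), ?_, ?_⟩
  · simp [Finset.sum_add_distrib, ← Finset.smul_sum, hXq, hXq']
  · simp only [Pi.add_apply, Pi.smul_apply, add_mul, smul_mul, trace_add, trace_smul,
      smul_eq_mul, Finset.sum_add_distrib, ← Finset.mul_sum, Prod.fst_add, Prod.smul_fst]
    gcongr

theorem isClosed_dualCone [DecidableEq n] : IsClosed (dualCone C) := by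
  refine isSeqClosed_iff_isClosed.1 fun q q₀ hq hlim => ?_
  choose X hX hXq hXt using hq
  obtain ⟨R, hR⟩ := ((continuous_snd.matrix_trace.tendsto q₀).comp hlim).bddAbove_range
  -- `|Xᵢ a b| ≤ (Xᵢ)ₐₐ + (Xᵢ)_bb ≤ 2 tr Xᵢ ≤ 2 tr (q j).2`, which converges
  have hbound : ∀ j i a b, X j i a b ∈ Set.Icc (-(2 * R)) (2 * R) := fun j i a b => by
    have htr : (X j i).trace ≤ (q j).2.trace := by
      rw [← hXq, trace_sum]
      exact Finset.single_le_sum (fun i _ => (hX j i).trace_nonneg) (Finset.mem_univ i)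
    have := (hX j i).abs_apply_le a b
    have := (hX j i).diag_le_trace a
    have := (hX j i).diag_le_trace b
    have := hR ⟨j, rfl⟩
    exact abs_le.1 (by simp only [Function.comp_apply] at *; linarith)
  have hbox : IsCompact (Set.univ.pi fun _ => Set.univ.pi fun _ => Set.univ.pi fun _ =>
      Set.Icc (-(2 * R)) (2 * R) : Set (ι → Matrix n n ℝ)) :=
    isCompact_univ_pi fun _ => isCompact_univ_pi fun _ => isCompact_univ_pi fun _ => isCompact_Icc
  obtain ⟨L, -, φ, hφ, hL⟩ := hbox.tendsto_subseq (x := X) fun j i _ a _ b _ => hbound j i a b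
  have hqφ := hlim.comp hφ.tendsto_atTop
  refine ⟨L, fun i => isClosed_setOf_posSemidef.mem_of_tendsto
    (((continuous_apply i).tendsto L).comp hL) (.of_forall fun j => hX (φ j) i), ?_, ?_⟩
  · refine tendsto_nhds_unique
      (((continuous_finsetSum _ fun i _ => continuous_apply i).tendsto L).comp hL) ?_
    simpa [Function.comp_def, hXq] using (continuous_snd.tendsto q₀).comp hqφ
  · have hobj : Continuous fun Y : ι → Matrix n n ℝ => ∑ i, (Y i * C i).trace :=
      continuous_finsetSum _ fun i _ =>
        ((continuous_apply i).matrix_mul continuous_const).matrix_trace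
    exact le_of_tendsto_of_tendsto' ((hobj.tendsto L).comp hL)
      ((continuous_fst.tendsto q₀).comp hqφ) fun j => hXt (φ j)

end

/-- Weak duality for the conic dual of `dualCone (Cmat k ylow)`: for `α > 0` the matrix `-Y / α` is
feasible for (P). -/
theorem pval_mul_add_trace_mul_nonneg {Ω Y : Matrix (Fin (k + 1)) (Fin (k + 1)) ℝ}
    (hΩ : Ω.PosSemidef) (hbdd : BddAbove {t | ∃ M, PFeasible k ylow M ∧ t = (Ω * M).trace})
    (hY : Y.IsSymm) {α : ℝ} (hα : 0 ≤ α)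
    (h : ∀ i V, V.PosSemidef → 0 ≤ (V * Cmat k ylow i).trace * α + (V * Y).trace) :
    0 ≤ pval k ylow Ω * α + (Ω * Y).trace := by
  rcases hα.eq_or_lt with hα0 | hα0
  · simpa [← hα0] using h 0 Ω hΩ
  have hM : PFeasible k ylow (-α⁻¹ • Y) := by
    refine pFeasible_of_forall_dotProduct_mulVec_le (hY.smul _) fun i x => ?_
    have := h i _ (posSemidef_vecMulVec_self_star x)
    simp only [star_trivial, trace_vecMulVec_mul] at this
    rw [smul_mulVec, dotProduct_smul, smul_eq_mul, neg_mul, neg_le, ← sub_nonneg]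
    have := mul_nonneg (inv_nonneg.2 hα0.le) this
    field_simp at this ⊢
    linarith
  have hle : (Ω * (-α⁻¹ • Y)).trace ≤ pval k ylow Ω := le_csSup hbdd ⟨_, hM, rfl⟩
  rw [Matrix.mul_smul, trace_smul, smul_eq_mul, neg_mul, neg_le, ← div_eq_inv_mul,
    le_div_iff₀ hα0] at hle
  linarith

/-- Strong duality. If `(p(Ω) + ε, Ω) ∉ dualCone`, a separating functional `(t, Z) ↦ α t + tr(Z Y)`
contradicts `pval_mul_add_trace_mul_nonneg`. -/
theorem exists_posSemidef_sum_eq_le_pval_add {Ω : Matrix (Fin (k + 1)) (Fin (k + 1)) ℝ}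
    (hΩ : Ω.PosSemidef) (hbdd : BddAbove {t | ∃ M, PFeasible k ylow M ∧ t = (Ω * M).trace})
    {ε : ℝ} (hε : 0 < ε) :
    ∃ X : Fin (k + 1) → Matrix (Fin (k + 1)) (Fin (k + 1)) ℝ, (∀ i, (X i).PosSemidef) ∧
      ∑ i, X i = Ω ∧ ∑ i, (X i * Cmat k ylow i).trace ≤ pval k ylow Ω + ε := by
  suffices (pval k ylow Ω + ε, Ω) ∈ dualCone (Cmat k ylow) from this
  by_contra hnot
  obtain ⟨f, u, hfΩ, hf⟩ :=
    geometric_hahn_banach_point_closed convex_dualCone isClosed_dualCone hnot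
  have hu : u < 0 := by
    simpa using hf 0 ⟨0, fun _ => .zero, by simp, by simp⟩
  have hf0 : ∀ q ∈ dualCone (Cmat k ylow), 0 ≤ f q := fun q hq => by
    by_contra! h
    have := hf _ (smul_mem_dualCone hq (div_nonneg_of_nonpos hu.le h.le))
    rw [map_smul, smul_eq_mul, div_mul_cancel₀ _ h.ne] at this
    exact lt_irrefl u this
  obtain ⟨Y, hY, hfY⟩ := exists_isSymm_forall_trace_mul_eq
    (f.toLinearMap ∘ₗ LinearMap.inr ℝ ℝ (Matrix (Fin (k + 1)) (Fin (k + 1)) ℝ))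
  have hf_apply : ∀ t Z, Z.IsSymm → f (t, Z) = t * f (1, 0) + (Z * Y).trace := fun t Z hZ => by
    rw [← hfY Z hZ, show (t, Z) = t • ((1 : ℝ), (0 : Matrix _ _ ℝ)) + (0, Z) by simp, map_add,
      map_smul, smul_eq_mul]
    rfl
  have hV : ∀ i V, V.PosSemidef → 0 ≤ (V * Cmat k ylow i).trace * f (1, 0) + (V * Y).trace :=
    fun i V hV => by
      rw [← hf_apply _ _ hV.isSymm]
      refine hf0 _ ⟨Pi.single i V, fun j => ?_, by simp, ?_⟩
      · by_cases hj : j = i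
        · subst hj; simpa using hV
        · simpa [hj] using PosSemidef.zero
      · rw [Fintype.sum_eq_single i fun j hj => by simp [hj]]
        simp
  have hα : 0 ≤ f (1, 0) := hf0 _ ⟨0, fun _ => .zero, by simp, by simp⟩
  have hΩY := hf_apply _ _ hΩ.isSymm ▸ hfΩ.trans hu
  nlinarith [pval_mul_add_trace_mul_nonneg hΩ hbdd hY hα hV]

end MomentSDP

open MomentSDP

theorem inf_expectation_eq_pval_general (k : ℕ) (hk : 1 ≤ k) (ylow : ℝ)
    (μv : Fin k → ℝ) (Sm : Matrix (Fin k) (Fin k) ℝ)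
    (hS : Sm.PosDef) :
    sInf {t : ℝ | ∃ P ∈ MomentSet k μv Sm, t = ∫ ξ, gfun k ylow ξ ∂P} =
      pval k ylow (OmegaMat k μv Sm) := by
  have hΩ := posSemidef_omegaMat (μv := μv) hS.posSemidef
  have hweak : ∀ M, PFeasible k ylow M → ∀ P ∈ MomentSet k μv Sm,
      (OmegaMat k μv Sm * M).trace ≤ ∫ ξ, gfun k ylow ξ ∂P := fun M hM P hP =>
    (mem_momentSet_iff.1 hP).trace_mul_le_integral_gfun hk hM
  obtain ⟨P₀, hP₀⟩ := exists_hasSecondMoments hΩ omegaMat_last_last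
  have hM₀ := pFeasible_neg_smul_one (k := k) (ylow := ylow)
  refine le_antisymm (le_of_forall_pos_le_add fun ε hε => ?_)
    (le_csInf ⟨_, P₀, mem_momentSet_iff.2 hP₀, rfl⟩ ?_)
  · obtain ⟨X, hX, hXΩ, hXt⟩ := exists_posSemidef_sum_eq_le_pval_add hΩ
      ⟨_, fun t ⟨M, hM, ht⟩ => ht ▸ hweak M hM P₀ (mem_momentSet_iff.2 hP₀)⟩ hε
    obtain ⟨P, hP, hPX⟩ :=
      exists_hasSecondMoments_integral_gfun_le hk hX (hXΩ ▸ omegaMat_last_last)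
    refine le_trans (csInf_le ?_ ⟨P, mem_momentSet_iff.2 (hXΩ ▸ hP), rfl⟩) (hPX.trans hXt)
    exact ⟨_, by rintro _ ⟨P', hP', rfl⟩; exact hweak _ hM₀ P' hP'⟩
  · rintro _ ⟨P, hP, rfl⟩
    exact csSup_le ⟨_, _, hM₀, rfl⟩ fun t ⟨M, hM, ht⟩ => ht ▸ hweak M hM P hP

/-- **Theorem 1 of the paper.** For `Σ ≻ 0` the infimum of `∫ g dP` over all probability
measures `P ∈ 𝒫(μ,Σ)` equals `p(Ω(μ,Σ))`, the optimal value of the SDP (P). -/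
theorem inf_expectation_eq_pval (k : ℕ) (hk : 1 ≤ k) (ylow : ℝ)
    (μv : Fin k → ℝ) (Sm : Matrix (Fin k) (Fin k) ℝ)
    (hSsymm : Sm.IsSymm) (hS : Sm.PosDef) :
    sInf {t : ℝ | ∃ P ∈ MomentSet k μv Sm, t = ∫ ξ, gfun k ylow ξ ∂P} =
      pval k ylow (OmegaMat k μv Sm) :=
  inf_expectation_eq_pval_general k hk ylow μv Sm hS
end

section
/- Let k ≥ 1, μ ∈ ℝ^k, and let Σ be a real symmetric k×k matrix. For every probability measure P ∈ 𝒫(μ,Σ) and every symmetric matrix M that is feasible for the primal SDP (P), one has trace(Ω(μ,Σ) M) ≤ ∫ g dP. (Weak duality between the SDP (P) and the moment problem, underlying the lower-bound property of the OEI acquisition function.) -/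
open Matrix MeasureTheory

/-! Put `x(ξ) = (ξ, 1)`. The moment conditions say exactly that `Ω(μ,Σ)` is the second moment
matrix `∫ x xᵀ dP`, so `trace(Ω M) = ∫ xᵀ M x dP`. Feasibility gives `xᵀ M x ≤ xᵀ C_i x` for every
`ξ` and `i`; these right-hand sides are `0` for `i = 0` and `ξ_i - ylow` for `i ≥ 1`, and their
minimum is `g(ξ)`. Integrate. -/

theorem dotProduct_mulVec_self_eq_sum {n R : Type*} [Fintype n] [CommSemiring R]
    (M : Matrix n n R) (x : n → R) : x ⬝ᵥ (M *ᵥ x) = ∑ a, ∑ b, x a * x b * M b a := by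
  simp only [dotProduct, mulVec, Finset.mul_sum]
  rw [Finset.sum_comm]
  exact Finset.sum_congr rfl fun _ _ => Finset.sum_congr rfl fun _ _ => by ring

theorem dotProduct_mulVec_le_of_posSemidef_sub {n R : Type*} [Fintype n] [CommRing R]
    [PartialOrder R] [StarRing R] [TrivialStar R] [IsOrderedAddMonoid R] {M C : Matrix n n R}
    (h : (C - M).PosSemidef) (x : n → R) : x ⬝ᵥ (M *ᵥ x) ≤ x ⬝ᵥ (C *ᵥ x) := by
  have := h.dotProduct_mulVec_nonneg x
  rwa [star_trivial, sub_mulVec, dotProduct_sub, sub_nonneg] at this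

section SecondMoment

variable {Ω n : Type*} [MeasurableSpace Ω]

noncomputable def secondMoment (P : Measure Ω) (X : Ω → n → ℝ) : Matrix n n ℝ :=
  Matrix.of fun a b => ∫ ω, X ω a * X ω b ∂P

variable [Fintype n] {P : Measure Ω} {X : Ω → n → ℝ}

theorem integrable_dotProduct_mulVec (hX : ∀ a b, Integrable (fun ω => X ω a * X ω b) P)
    (M : Matrix n n ℝ) : Integrable (fun ω => X ω ⬝ᵥ (M *ᵥ X ω)) P := by
  simp_rw [dotProduct_mulVec_self_eq_sum]
  exact integrable_finsetSum _ fun a _ => integrable_finsetSum _ fun b _ => (hX a b).mul_const _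

theorem trace_secondMoment_mul (hX : ∀ a b, Integrable (fun ω => X ω a * X ω b) P)
    (M : Matrix n n ℝ) : (secondMoment P X * M).trace = ∫ ω, X ω ⬝ᵥ (M *ᵥ X ω) ∂P := by
  simp_rw [dotProduct_mulVec_self_eq_sum]
  rw [integral_finsetSum _ fun a _ => integrable_finsetSum _ fun b _ => (hX a b).mul_const _]
  simp_rw [integral_finsetSum _ fun b _ => (hX _ b).mul_const _, integral_mul_const]
  rfl

end SecondMoment

theorem snoc_dotProduct_Cmat_succ_mulVec (k : ℕ) (ylow : ℝ) (ξ : Fin k → ℝ) (i : Fin k) :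
    (Fin.snoc ξ 1 : Fin (k + 1) → ℝ) ⬝ᵥ (Cmat k ylow i.succ *ᵥ Fin.snoc ξ 1) = ξ i - ylow := by
  simp [Cmat, dotProduct, mulVec, Fin.sum_univ_castSucc, Fin.castSucc_ne_last,
    (Fin.castSucc_ne_last _).symm, Fin.castSucc_inj]
  ring

theorem snoc_dotProduct_mulVec_le_gfun (k : ℕ) (hk : 1 ≤ k) (ylow : ℝ)
    {M : Matrix (Fin (k + 1)) (Fin (k + 1)) ℝ}
    (hM : PFeasible k ylow M) (ξ : Fin k → ℝ) :
    (Fin.snoc ξ 1 : Fin (k + 1) → ℝ) ⬝ᵥ (M *ᵥ Fin.snoc ξ 1) ≤ gfun k ylow ξ := by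
  have : Nonempty (Fin k) := ⟨⟨0, hk⟩⟩
  obtain ⟨i, hi⟩ := exists_eq_ciInf_of_finite (f := ξ)
  rw [gfun, ← hi]
  rcases le_total ylow (ξ i) with hle | hle
  · have hC0 : Cmat k ylow 0 = 0 := rfl
    simpa [min_eq_right hle, hC0] using
      dotProduct_mulVec_le_of_posSemidef_sub (hM.2 0) (Fin.snoc ξ 1)
  · rw [min_eq_left hle, ← snoc_dotProduct_Cmat_succ_mulVec]
    exact dotProduct_mulVec_le_of_posSemidef_sub (hM.2 i.succ) _

theorem integrable_iInf_apply {ι : Type*} [Fintype ι] {P : Measure (ι → ℝ)}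
    (h : ∀ i, Integrable (fun ξ => ξ i) P) : Integrable (fun ξ => ⨅ i, ξ i) P := by
  refine (integrable_finsetSum Finset.univ fun i _ => (h i).abs).mono'
    (Measurable.iInf fun i => measurable_pi_apply i).aestronglyMeasurable
    (Filter.Eventually.of_forall fun ξ => ?_)
  rcases isEmpty_or_nonempty ι with hι | hι
  · simp
  · obtain ⟨i, hi⟩ := exists_eq_ciInf_of_finite (f := ξ)
    rw [← hi, Real.norm_eq_abs]
    exact Finset.single_le_sum (f := fun i => |ξ i|) (fun i _ => abs_nonneg _)
      (Finset.mem_univ i)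

theorem integrable_gfun (k : ℕ) (ylow : ℝ) {P : Measure (Fin k → ℝ)} [IsFiniteMeasure P]
    (h : ∀ i, Integrable (fun ξ => ξ i) P) : Integrable (gfun k ylow) P :=
  ((integrable_iInf_apply h).inf (integrable_const ylow)).sub (integrable_const ylow)

theorem integrable_snoc_mul_snoc {k : ℕ} {P : Measure (Fin k → ℝ)} [IsFiniteMeasure P]
    (h1 : ∀ i, Integrable (fun ξ => ξ i) P) (h2 : ∀ i j, Integrable (fun ξ => ξ i * ξ j) P)
    (a b : Fin (k + 1)) :
    Integrable
      (fun ξ => (Fin.snoc ξ 1 : Fin (k + 1) → ℝ) a * (Fin.snoc ξ 1 : Fin (k + 1) → ℝ) b) P := by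
  induction a using Fin.lastCases <;> induction b using Fin.lastCases <;>
    simp [h1, h2]

theorem OmegaMat_eq_secondMoment {k : ℕ} {μv : Fin k → ℝ} {Sm : Matrix (Fin k) (Fin k) ℝ}
    {P : Measure (Fin k → ℝ)} (hP : P ∈ MomentSet k μv Sm) :
    OmegaMat k μv Sm = secondMoment P (fun ξ => Fin.snoc ξ 1) := by
  obtain ⟨hprob, -, -, hmean, hsecond⟩ := hP
  ext a b
  induction a using Fin.lastCases <;> induction b using Fin.lastCases <;>
    simp [OmegaMat, secondMoment, hmean, hsecond]

theorem weak_duality_general (k : ℕ) (hk : 1 ≤ k) (ylow : ℝ)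
    (μv : Fin k → ℝ) (Sm : Matrix (Fin k) (Fin k) ℝ)
    (P : Measure (Fin k → ℝ)) (hP : P ∈ MomentSet k μv Sm)
    (M : Matrix (Fin (k + 1)) (Fin (k + 1)) ℝ) (hM : PFeasible k ylow M) :
    (OmegaMat k μv Sm * M).trace ≤ ∫ ξ, gfun k ylow ξ ∂P := by
  rw [OmegaMat_eq_secondMoment hP]
  obtain ⟨hprob, h1, h2, -, -⟩ := hP
  have hsnoc := integrable_snoc_mul_snoc h1 h2
  rw [trace_secondMoment_mul hsnoc]
  exact integral_mono (integrable_dotProduct_mulVec hsnoc M) (integrable_gfun k ylow h1)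
    (snoc_dotProduct_mulVec_le_gfun k hk ylow hM)

/-- **Weak duality** between the SDP (P) and the moment problem: for every
`P ∈ 𝒫(μ,Σ)` and every feasible `M`, `⟨Ω(μ,Σ), M⟩ ≤ ∫ g dP`. -/
theorem weak_duality (k : ℕ) (hk : 1 ≤ k) (ylow : ℝ)
    (μv : Fin k → ℝ) (Sm : Matrix (Fin k) (Fin k) ℝ) (hSsymm : Sm.IsSymm)
    (P : Measure (Fin k → ℝ)) (hP : P ∈ MomentSet k μv Sm)
    (M : Matrix (Fin (k + 1)) (Fin (k + 1)) ℝ) (hM : PFeasible k ylow M) :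
    (OmegaMat k μv Sm * M).trace ≤ ∫ ξ, gfun k ylow ξ ∂P :=
  weak_duality_general k hk ylow μv Sm P hP M hM
end

section
/- Let k ≥ 1 and let M be a real symmetric (k+1)×(k+1) matrix that is feasible for the primal SDP (P). Then the upper-left k×k block M₁₁ of M is negative definite. (Lemma 1 / Lemma 'PositiveDefinite' of the paper.) -/
open Matrix MeasureTheory

/-! If `xᵀ(-M₁₁)x = 0` with `x ≠ 0`, then `x' = (x, 0)` is an isotropic vector of every positive
semidefinite `C_i - M`, because every `C_i` vanishes on the upper-left block; so `x'` lies in all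
their kernels. Subtracting the constraint `i = 0` gives `C_i x' = 0`, whereas the last coordinate
of `C_i x'` is `x_i / 2`. -/

lemma Matrix.snoc_zero_dotProduct_mulVec_snoc_zero {R : Type*} [NonUnitalNonAssocSemiring R]
    {n : ℕ} (A : Matrix (Fin (n + 1)) (Fin (n + 1)) R) (x y : Fin n → R) :
    (Fin.snoc y 0 : Fin (n + 1) → R) ⬝ᵥ A *ᵥ Fin.snoc x 0 =
      y ⬝ᵥ A.submatrix Fin.castSucc Fin.castSucc *ᵥ x := by
  simp [dotProduct, mulVec, Fin.sum_univ_castSucc]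

lemma Matrix.PosSemidef.mulVec_snoc_zero_eq_zero {n : ℕ} {A : Matrix (Fin (n + 1)) (Fin (n + 1)) ℝ}
    (hA : A.PosSemidef) {x : Fin n → ℝ} (hx : x ⬝ᵥ A.submatrix Fin.castSucc Fin.castSucc *ᵥ x = 0) :
    A *ᵥ Fin.snoc x 0 = 0 := by
  rw [← hA.dotProduct_mulVec_zero_iff, star_trivial, snoc_zero_dotProduct_mulVec_snoc_zero, hx]

lemma Cmat_sub_submatrix_castSucc (k : ℕ) (ylow : ℝ) (M : Matrix (Fin (k + 1)) (Fin (k + 1)) ℝ)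
    (i : Fin (k + 1)) :
    (Cmat k ylow i - M).submatrix Fin.castSucc Fin.castSucc =
      -M.submatrix Fin.castSucc Fin.castSucc := by
  cases i using Fin.cases with
  | zero => ext a b; simp [Cmat]
  | succ i =>
    ext a b
    simp [Cmat, Fin.castSucc_ne_last]

lemma Cmat_succ_mulVec_snoc_zero_last (k : ℕ) (ylow : ℝ) (i : Fin k) (x : Fin k → ℝ) :
    (Cmat k ylow i.succ *ᵥ Fin.snoc x 0) (Fin.last k) = x i / 2 := by
  simp [Cmat, mulVec, dotProduct, Fin.sum_univ_castSucc, Fin.castSucc_ne_last,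
    div_eq_inv_mul]

theorem upperLeftBlock_negDef_general (k : ℕ) (ylow : ℝ)
    (M : Matrix (Fin (k + 1)) (Fin (k + 1)) ℝ) (hM : PFeasible k ylow M) :
    (-(M.submatrix (Fin.castSucc : Fin k → Fin (k + 1)) Fin.castSucc)).PosDef := by
  have hN : (-M.submatrix (Fin.castSucc : Fin k → Fin (k + 1)) Fin.castSucc).PosSemidef := by
    simpa only [Cmat_sub_submatrix_castSucc] using (hM.2 0).submatrix Fin.castSucc
  refine .of_dotProduct_mulVec_pos hN.1 fun x hx => ?_
  by_contra hle
  have hx0 : x ⬝ᵥ (-M.submatrix Fin.castSucc Fin.castSucc) *ᵥ x = 0 :=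
    le_antisymm (not_lt.1 hle) (by simpa using hN.dotProduct_mulVec_nonneg x)
  have hker : ∀ j, (Cmat k ylow j - M) *ᵥ Fin.snoc x 0 = 0 := fun j =>
    (hM.2 j).mulVec_snoc_zero_eq_zero (by rw [Cmat_sub_submatrix_castSucc]; exact hx0)
  obtain ⟨i, hi⟩ := Function.ne_iff.mp hx
  have hCi : Cmat k ylow i.succ *ᵥ Fin.snoc x 0 = 0 := by
    have hdiff : Cmat k ylow i.succ *ᵥ Fin.snoc x 0 =
        (Cmat k ylow i.succ - M) *ᵥ Fin.snoc x 0 - (Cmat k ylow 0 - M) *ᵥ Fin.snoc x 0 := by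
      rw [show Cmat k ylow 0 = 0 from rfl, zero_sub, sub_mulVec, neg_mulVec, sub_neg_eq_add,
        sub_add_cancel]
    rw [hdiff, hker, hker, sub_zero]
  have hlast := congrFun hCi (Fin.last k)
  rw [Cmat_succ_mulVec_snoc_zero_last] at hlast
  exact hi (by simpa using hlast)

/-- **Lemma 1 ('PositiveDefinite') of the paper.** For any feasible `M` of (P), the
upper-left `k × k` block `M₁₁` is negative definite. -/
theorem upperLeftBlock_negDef (k : ℕ) (hk : 1 ≤ k) (ylow : ℝ)
    (M : Matrix (Fin (k + 1)) (Fin (k + 1)) ℝ) (hM : PFeasible k ylow M) :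
    (-(M.submatrix (Fin.castSucc : Fin k → Fin (k + 1)) Fin.castSucc)).PosDef :=
  upperLeftBlock_negDef_general k ylow M hM
end

section
/- Let k ≥ 1, let Ω be a real symmetric positive definite (k+1)×(k+1) matrix, and let (M̄, Ȳ_0, …, Ȳ_k) be a KKT pair for (P) at Ω. Then for every i = 0,…,k: rank(Ȳ_i) = 1, rank(M̄ − C_i) = k, and the column space of Ȳ_i equals the null space of M̄ − C_i. (Lemma 2 / Lemma 'dualProperties' of the paper.) -/
open Matrix MeasureTheory

/-- A KKT pair for (P) at `Ω`: a feasible `M̄` together with positive semidefinite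
multipliers `Ȳ_0, …, Ȳ_k` with `∑ Ȳ_i = Ω` and `Ȳ_i (M̄ - C_i) = 0` for all `i`. -/
def KKTpair (k : ℕ) (ylow : ℝ) (Ω M : Matrix (Fin (k + 1)) (Fin (k + 1)) ℝ)
    (Y : Fin (k + 1) → Matrix (Fin (k + 1)) (Fin (k + 1)) ℝ) : Prop :=
  PFeasible k ylow M ∧ (∀ i, (Y i).PosSemidef) ∧ (∑ i, Y i) = Ω ∧
    ∀ i, Y i * (M - Cmat k ylow i) = 0

/-!
Complementary slackness puts the range of `Ȳ_i` inside `ker (M̄ - C_i)`, and this kernel is at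
most one-dimensional: a kernel vector `u` with vanishing last coordinate is isotropic for every
`C_j`, hence for every `C_j - M̄ ⪰ 0`, so `C_j u = M̄ u` for all `j`; comparing with `C_0 = 0`,
the last coordinate of `C_j u` is `u_j / 2 = 0`. As `Ω = ∑ Ȳ_i` has full rank `k + 1`,
subadditivity of rank forces every `Ȳ_i` to have rank exactly one, so its range is the kernel.
-/

namespace Matrix

variable {m n K : Type*} [Fintype n] [Field K]

theorem rank_add_le (A B : Matrix m n K) : (A + B).rank ≤ A.rank + B.rank := by
  rw [rank, rank, rank, mulVecLin_add]
  exact (Submodule.finrank_mono (LinearMap.range_add_le A.mulVecLin B.mulVecLin)).trans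
    (Submodule.finrank_add_le_finrank_add_finrank _ _)

theorem rank_sum_le {ι : Type*} (s : Finset ι) (A : ι → Matrix m n K) :
    (∑ i ∈ s, A i).rank ≤ ∑ i ∈ s, (A i).rank := by
  classical
  induction s using Finset.induction with
  | empty => simp
  | insert a s ha ih =>
    rw [Finset.sum_insert ha, Finset.sum_insert ha]
    exact (rank_add_le _ _).trans (Nat.add_le_add_left ih _)

theorem range_mulVecLin_le_ker_of_mul_eq_zero {o : Type*} [Fintype o] {A : Matrix m n K}
    {B : Matrix n o K} (h : A * B = 0) : LinearMap.range B.mulVecLin ≤ LinearMap.ker A.mulVecLin :=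
  LinearMap.range_le_ker_iff.2 <| by rw [← mulVecLin_mul, h, mulVecLin_zero]

theorem range_mulVecLin_le_ker_of_mul_eq_zero_of_isSymm {A B : Matrix n n K} (hA : A.IsSymm)
    (hB : B.IsSymm) (h : B * A = 0) : LinearMap.range B.mulVecLin ≤ LinearMap.ker A.mulVecLin :=
  range_mulVecLin_le_ker_of_mul_eq_zero <| by
    rw [← hA.eq, ← hB.eq, ← transpose_mul, h, transpose_zero]

theorem rank_add_finrank_ker (A : Matrix m n K) :
    A.rank + Module.finrank K (LinearMap.ker A.mulVecLin) = Fintype.card n := by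
  rw [rank, LinearMap.finrank_range_add_finrank_ker, Module.finrank_fintype_fun_eq_card]

end Matrix

theorem Finset.eq_one_of_card_le_sum {ι : Type*} {s : Finset ι} {f : ι → ℕ}
    (hf : ∀ i ∈ s, f i ≤ 1) (hs : s.card ≤ ∑ i ∈ s, f i) {i : ι} (hi : i ∈ s) : f i = 1 := by
  by_contra hne
  have : ∑ j ∈ s, f j < ∑ _j ∈ s, 1 :=
    Finset.sum_lt_sum hf ⟨i, hi, lt_of_le_of_ne (hf i hi) hne⟩
  simp only [Finset.sum_const, smul_eq_mul, mul_one] at this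
  omega

section Cmat
variable {k : ℕ} {ylow : ℝ}

lemma Cmat_succ_mulVec_of_last_eq_zero (j : Fin k) {u : Fin (k + 1) → ℝ}
    (hu : u (Fin.last k) = 0) :
    Cmat k ylow j.succ *ᵥ u = Pi.single (Fin.last k) (u j.castSucc / 2) := by
  have hne : j.castSucc ≠ Fin.last k := (Fin.castSucc_lt_last j).ne
  ext a
  by_cases ha : a = Fin.last k
  · subst ha
    simp only [Cmat, Fin.cases_succ, mulVec, dotProduct, of_apply, Pi.single_eq_same]
    rw [Fintype.sum_eq_single j.castSucc fun b hb => by split_ifs <;> simp_all]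
    simp [hne.symm, div_eq_inv_mul]
  · simp [Cmat, mulVec, dotProduct, ha, hu, ite_and]

lemma dotProduct_Cmat_mulVec_of_last_eq_zero (i : Fin (k + 1)) {u : Fin (k + 1) → ℝ}
    (hu : u (Fin.last k) = 0) : u ⬝ᵥ Cmat k ylow i *ᵥ u = 0 := by
  induction i using Fin.cases with
  | zero => simp [Cmat]
  | succ j => rw [Cmat_succ_mulVec_of_last_eq_zero j hu, dotProduct_single, hu, zero_mul]

lemma eq_zero_of_mulVec_eq_zero_of_last_eq_zero {M : Matrix (Fin (k + 1)) (Fin (k + 1)) ℝ}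
    (hM : ∀ j, (Cmat k ylow j - M).PosSemidef) (i : Fin (k + 1)) {u : Fin (k + 1) → ℝ}
    (hker : (M - Cmat k ylow i) *ᵥ u = 0) (hu : u (Fin.last k) = 0) : u = 0 := by
  have hMu : M *ᵥ u = Cmat k ylow i *ᵥ u := by rwa [sub_mulVec, sub_eq_zero] at hker
  have hCM : ∀ j, Cmat k ylow j *ᵥ u = M *ᵥ u := fun j => by
    rw [← sub_eq_zero, ← sub_mulVec, ← (hM j).dotProduct_mulVec_zero_iff, star_trivial,
      sub_mulVec, dotProduct_sub, hMu, dotProduct_Cmat_mulVec_of_last_eq_zero j hu,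
      dotProduct_Cmat_mulVec_of_last_eq_zero i hu, sub_zero]
  funext a
  induction a using Fin.lastCases with
  | last => exact hu
  | cast j =>
    have h := congrFun ((hCM j.succ).trans (hCM 0).symm) (Fin.last k)
    simp only [Cmat_succ_mulVec_of_last_eq_zero j hu, Pi.single_eq_same] at h
    simpa [Cmat] using h

lemma finrank_ker_le_one {M : Matrix (Fin (k + 1)) (Fin (k + 1)) ℝ}
    (hM : ∀ j, (Cmat k ylow j - M).PosSemidef) (i : Fin (k + 1)) :
    Module.finrank ℝ (LinearMap.ker (M - Cmat k ylow i).mulVecLin) ≤ 1 := by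
  let eval_last := (LinearMap.proj (R := ℝ) (φ := fun _ => ℝ) (Fin.last k)).domRestrict
    (LinearMap.ker (M - Cmat k ylow i).mulVecLin)
  have hinj : Function.Injective eval_last := by
    rw [← LinearMap.ker_eq_bot, LinearMap.ker_eq_bot']
    rintro ⟨u, hker⟩ hu
    exact Subtype.ext (eq_zero_of_mulVec_eq_zero_of_last_eq_zero hM i hker hu)
  simpa using LinearMap.finrank_le_finrank_of_injective hinj

end Cmat

theorem dualProperties_general (k : ℕ) (ylow : ℝ)
    (Ω : Matrix (Fin (k + 1)) (Fin (k + 1)) ℝ) (hΩ : Ω.PosDef)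
    (M : Matrix (Fin (k + 1)) (Fin (k + 1)) ℝ)
    (Y : Fin (k + 1) → Matrix (Fin (k + 1)) (Fin (k + 1)) ℝ)
    (hKKT : KKTpair k ylow Ω M Y) :
    ∀ i : Fin (k + 1),
      (Y i).rank = 1 ∧ (M - Cmat k ylow i).rank = k ∧
        LinearMap.range (Y i).mulVecLin = LinearMap.ker (M - Cmat k ylow i).mulVecLin := by
  obtain ⟨⟨-, hM⟩, hY, hsum, hcomp⟩ := hKKT
  have hrange : ∀ i, LinearMap.range (Y i).mulVecLin ≤
      LinearMap.ker (M - Cmat k ylow i).mulVecLin := fun i =>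
    range_mulVecLin_le_ker_of_mul_eq_zero_of_isSymm
      (by simpa using isHermitian_iff_isSymm.1 (hM i).isHermitian.neg)
      (isHermitian_iff_isSymm.1 (hY i).isHermitian) (hcomp i)
  have hrankY : ∀ i, (Y i).rank ≤ 1 := fun i =>
    (Submodule.finrank_mono (hrange i)).trans (finrank_ker_le_one hM i)
  have hrankΩ : (Finset.univ : Finset (Fin (k + 1))).card ≤ ∑ i, (Y i).rank := by
    calc (Finset.univ : Finset (Fin (k + 1))).card = Ω.rank := by
          rw [rank_of_isUnit Ω hΩ.isUnit, Finset.card_univ]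
      _ ≤ ∑ i, (Y i).rank := hsum ▸ rank_sum_le Finset.univ Y
  have hrankY_eq : ∀ i, (Y i).rank = 1 := fun i =>
    Finset.eq_one_of_card_le_sum (fun i _ => hrankY i) hrankΩ (Finset.mem_univ i)
  intro i
  have hrange_eq := Submodule.eq_of_le_of_finrank_le (hrange i)
    ((finrank_ker_le_one hM i).trans (hrankY_eq i).ge)
  refine ⟨hrankY_eq i, ?_, hrange_eq⟩
  have hnullity := rank_add_finrank_ker (M - Cmat k ylow i)
  rw [← hrange_eq, Fintype.card_fin] at hnullity
  have hY_finrank : Module.finrank ℝ (LinearMap.range (Y i).mulVecLin) = 1 := hrankY_eq i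
  omega

/-- **Lemma 2 ('dualProperties') of the paper.** If `Ω ≻ 0` and `(M̄, Ȳ_0, …, Ȳ_k)` is a
KKT pair for (P) at `Ω`, then each `Ȳ_i` has rank one, each `M̄ - C_i` has rank `k`, and the
column space of `Ȳ_i` equals the null space of `M̄ - C_i`. -/
theorem dualProperties (k : ℕ) (hk : 1 ≤ k) (ylow : ℝ)
    (Ω : Matrix (Fin (k + 1)) (Fin (k + 1)) ℝ) (hΩ : Ω.PosDef)
    (M : Matrix (Fin (k + 1)) (Fin (k + 1)) ℝ)
    (Y : Fin (k + 1) → Matrix (Fin (k + 1)) (Fin (k + 1)) ℝ)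
    (hKKT : KKTpair k ylow Ω M Y) :
    ∀ i : Fin (k + 1),
      (Y i).rank = 1 ∧ (M - Cmat k ylow i).rank = k ∧
        LinearMap.range (Y i).mulVecLin = LinearMap.ker (M - Cmat k ylow i).mulVecLin :=
  dualProperties_general k ylow Ω hΩ M Y hKKT
end

section
/- Let n ≥ 1 and let α₁ : ℝⁿ → ℝ and α₂ : ℝⁿ × ℝⁿ → ℝ satisfy: α₂(x, y) = α₂(y, x) for all x, y ∈ ℝⁿ; α₂(x, y) ≤ α₁(x) for all x, y ∈ ℝⁿ; and α₂(x, x) = α₁(x) for all x ∈ ℝⁿ. Suppose α₁ is Fréchet differentiable at some point x₀ with nonzero derivative. Then α₂ is not Fréchet differentiable at (x₀, x₀). (Core of Proposition 1 in Appendix D of the paper: the two-point expected improvement α₂, which is symmetric, lower-bounds the one-point expected improvement α₁ and agrees with it on the diagonal, is non-differentiable at perfectly correlated batch points where α₁ has a descent direction.) -/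
/-!
If `α₂` had a derivative `D` at `(x₀, x₀)`, then `α₁ = α₂ ∘ diag` would have derivative
`v ↦ D (v, v)`. Both slices `x ↦ α₂ (x, x₀)` and `x ↦ α₂ (x₀, x)` touch `α₁` from below at `x₀`,
so their derivatives `v ↦ D (v, 0)` and `v ↦ D (0, v)` also equal `v ↦ D (v, v)`. Linearity then
gives `D (v, v) = 2 D (v, v)`, so `α₁` has zero derivative at `x₀`.
-/

open Filter Topology ContinuousLinearMap

variable {E : Type*} [NormedAddCommGroup E] [NormedSpace ℝ E]

theorem HasFDerivAt.eq_of_eventuallyLE_of_eq {f g : E → ℝ} {f' g' : E →L[ℝ] ℝ} {a : E}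
    (hf : HasFDerivAt f f' a) (hg : HasFDerivAt g g' a) (hle : f ≤ᶠ[𝓝 a] g) (heq : f a = g a) :
    f' = g' := by
  have hmin : IsLocalMin (g - f) a := by
    filter_upwards [hle] with x hx
    simp only [Pi.sub_apply, heq, sub_self]
    linarith
  exact (sub_eq_zero.mp (hmin.hasFDerivAt_eq_zero (hg.sub hf))).symm

theorem fderiv_eq_zero_of_symm_le_of_diag (α₁ : E → ℝ) (α₂ : E × E → ℝ)
    (hsymm : ∀ x y, α₂ (x, y) = α₂ (y, x)) (hle : ∀ x y, α₂ (x, y) ≤ α₁ x)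
    (hdiag : ∀ x, α₂ (x, x) = α₁ x) (x₀ : E) (hd : DifferentiableAt ℝ α₂ (x₀, x₀)) :
    fderiv ℝ α₁ x₀ = 0 := by
  set D := fderiv ℝ α₂ (x₀, x₀)
  have hD : HasFDerivAt α₂ D (x₀, x₀) := hd.hasFDerivAt
  set Δ : E →L[ℝ] E × E := (ContinuousLinearMap.id ℝ E).prod (ContinuousLinearMap.id ℝ E)
  have h₁ : HasFDerivAt α₁ (D.comp Δ) x₀ := by
    rw [← funext hdiag]
    exact hD.comp (f := fun x => (x, x)) x₀ ((hasFDerivAt_id x₀).prodMk (hasFDerivAt_id x₀))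
  have hleft : D.comp (inl ℝ E E) = D.comp Δ :=
    (hD.comp (f := fun x => (x, x₀)) x₀ (hasFDerivAt_prodMk_left x₀ x₀))
      |>.eq_of_eventuallyLE_of_eq h₁ (Eventually.of_forall fun x => hle x x₀) (hdiag x₀)
  have hright : D.comp (inr ℝ E E) = D.comp Δ :=
    (hD.comp (f := fun x => (x₀, x)) x₀ (hasFDerivAt_prodMk_right x₀ x₀))
      |>.eq_of_eventuallyLE_of_eq h₁
        (Eventually.of_forall fun x => (hsymm x₀ x).trans_le (hle x x₀)) (hdiag x₀)
  ext v
  have hv₁ : D (v, 0) = D (v, v) := congr($hleft v)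
  have hv₂ : D (0, v) = D (v, v) := congr($hright v)
  have hsplit : D (v, v) = D (v, 0) + D (0, v) := by
    rw [← D.map_add, Prod.mk_add_mk, add_zero, zero_add]
  rw [h₁.fderiv, zero_apply]
  exact (by linarith : D (v, v) = 0)

theorem twoPoint_not_differentiable_general (n : ℕ)
    (α₁ : (Fin n → ℝ) → ℝ) (α₂ : (Fin n → ℝ) × (Fin n → ℝ) → ℝ)
    (hsymm : ∀ x y : Fin n → ℝ, α₂ (x, y) = α₂ (y, x))
    (hle : ∀ x y : Fin n → ℝ, α₂ (x, y) ≤ α₁ x)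
    (hdiag : ∀ x : Fin n → ℝ, α₂ (x, x) = α₁ x)
    (x₀ : Fin n → ℝ)
    (hne : fderiv ℝ α₁ x₀ ≠ 0) :
    ¬ DifferentiableAt ℝ α₂ (x₀, x₀) := fun hd =>
  hne (fderiv_eq_zero_of_symm_le_of_diag α₁ α₂ hsymm hle hdiag x₀ hd)

/-- **Core of Proposition 1 (Appendix D) of the paper.** Let `α₂` be symmetric, bounded
above by `α₁` in its first argument, and agreeing with `α₁` on the diagonal (as the
two-point and one-point expected improvement do). If `α₁` is Fréchet differentiable at `x₀`
with nonzero derivative, then `α₂` is not Fréchet differentiable at `(x₀, x₀)`. -/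
theorem twoPoint_not_differentiable (n : ℕ) (hn : 1 ≤ n)
    (α₁ : (Fin n → ℝ) → ℝ) (α₂ : (Fin n → ℝ) × (Fin n → ℝ) → ℝ)
    (hsymm : ∀ x y : Fin n → ℝ, α₂ (x, y) = α₂ (y, x))
    (hle : ∀ x y : Fin n → ℝ, α₂ (x, y) ≤ α₁ x)
    (hdiag : ∀ x : Fin n → ℝ, α₂ (x, x) = α₁ x)
    (x₀ : Fin n → ℝ)
    (hdiff : DifferentiableAt ℝ α₁ x₀) (hne : fderiv ℝ α₁ x₀ ≠ 0) :
    ¬ DifferentiableAt ℝ α₂ (x₀, x₀) :=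
  twoPoint_not_differentiable_general n α₁ α₂ hsymm hle hdiag x₀ hne
end
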